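/- arXiv:2107.10890 — 6 statements merged into one kernel-verified Lean document; each statement's English description precedes it below -/
import Mathlib

section
/- Let T: V → g be a Θ-twisted O-operator. Then {u,v,w} := ρ(Tu,Tv)w and [[u,v,w]] := Θ(Tu,Tv,Tw) define a 3-NS-Lie algebra structure on V, whose subadjacent 3-Lie algebra is (V, [·,·,·]_T). -/
universe u

def Skew12 {A M : Type*} [Neg M] (f : A → A → A → M) : Prop :=
  ∀ x y z, f x y z = - f y x z

def Skew23 {A M : Type*} [Neg M] (f : A → A → A → M) : Prop :=
  ∀ x y z, f x y z = - f x z y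

def LinFst (K : Type*) [Field K] {A M : Type*} [AddCommGroup A] [Module K A]
    [AddCommGroup M] [Module K M] (f : A → A → A → M) : Prop :=
  ∀ (a : K) (x x' y z : A), f (a • x + x') y z = a • f x y z + f x' y z

def LinThd (K : Type*) [Field K] {A M : Type*} [AddCommGroup A] [Module K A]
    [AddCommGroup M] [Module K M] (f : A → A → A → M) : Prop :=
  ∀ (a : K) (x y z z' : A), f x y (a • z + z') = a • f x y z + f x y z'

/-- A 3-Lie algebra structure: a trilinear skew-symmetric bracket satisfying
the Filippov (fundamental) identity. -/
def IsThreeLie (K : Type*) [Field K] {A : Type*} [AddCommGroup A] [Module K A]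
    (b : A → A → A → A) : Prop :=
  LinFst K b ∧ Skew12 b ∧ Skew23 b ∧
    ∀ x1 x2 x3 x4 x5 : A,
      b x1 x2 (b x3 x4 x5) =
        b (b x1 x2 x3) x4 x5 + b x3 (b x1 x2 x4) x5 + b x3 x4 (b x1 x2 x5)

/-- A representation of a 3-Lie algebra on a module. -/
def IsRep (K : Type*) [Field K] {A M : Type*} [AddCommGroup A] [Module K A]
    [AddCommGroup M] [Module K M] (b : A → A → A → A) (ρ : A → A → M → M) : Prop :=
  (∀ (a : K) (x x' y : A) (v : M), ρ (a • x + x') y v = a • ρ x y v + ρ x' y v) ∧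
  (∀ (x y : A) (v : M), ρ x y v = - ρ y x v) ∧
  (∀ (x y : A) (a : K) (v v' : M), ρ x y (a • v + v') = a • ρ x y v + ρ x y v') ∧
  (∀ (x1 x2 x3 x4 : A) (v : M),
      ρ x1 x2 (ρ x3 x4 v) =
        ρ (b x1 x2 x3) x4 v + ρ x3 (b x1 x2 x4) v + ρ x3 x4 (ρ x1 x2 v)) ∧
  (∀ (x1 x2 x3 x4 : A) (v : M),
      ρ (b x1 x2 x3) x4 v =
        ρ x1 x2 (ρ x3 x4 v) + ρ x2 x3 (ρ x1 x4 v) + ρ x3 x1 (ρ x2 x4 v))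

/-- A 2-cocycle in the Chevalley-Eilenberg complex of a 3-Lie algebra. -/
def IsCocycle (K : Type*) [Field K] {A M : Type*} [AddCommGroup A] [Module K A]
    [AddCommGroup M] [Module K M] (b : A → A → A → A) (ρ : A → A → M → M)
    (Θ : A → A → A → M) : Prop :=
  LinFst K Θ ∧ Skew12 Θ ∧ Skew23 Θ ∧
    ∀ x1 x2 y1 y2 y3 : A,
      Θ x1 x2 (b y1 y2 y3) + ρ x1 x2 (Θ y1 y2 y3) =
        Θ (b x1 x2 y1) y2 y3 + Θ y1 (b x1 x2 y2) y3 + Θ y1 y2 (b x1 x2 y3)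
          + ρ y2 y3 (Θ x1 x2 y1) + ρ y3 y1 (Θ x1 x2 y2) + ρ y1 y2 (Θ x1 x2 y3)

/-- A Θ-twisted O-operator on a 3-Lie algebra. -/
def IsTwistedO {K : Type*} [Field K] {A M : Type*} [AddCommGroup A] [Module K A]
    [AddCommGroup M] [Module K M] (b : A → A → A → A) (ρ : A → A → M → M)
    (Θ : A → A → A → M) (T : M →ₗ[K] A) : Prop :=
  ∀ u v w : M,
    b (T u) (T v) (T w) =
      T (ρ (T u) (T v) w + ρ (T v) (T w) u + ρ (T w) (T u) v + Θ (T u) (T v) (T w))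

/-- The Θ-twisted semidirect product bracket on A × M. -/
def sdBracket {A M : Type*} [AddCommGroup M]
    (b : A → A → A → A) (ρ : A → A → M → M) (Θ : A → A → A → M) :
    A × M → A × M → A × M → A × M :=
  fun p q r =>
    (b p.1 q.1 r.1,
      ρ p.1 q.1 r.2 + ρ r.1 p.1 q.2 + ρ q.1 r.1 p.2 + Θ p.1 q.1 r.1)

/-- The bracket [u,v,w]_T induced on V by a twisted O-operator T. -/
def indBracket {K : Type*} [Field K] {A M : Type*} [AddCommGroup A] [Module K A]
    [AddCommGroup M] [Module K M] (ρ : A → A → M → M) (Θ : A → A → A → M)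
    (T : M →ₗ[K] A) : M → M → M → M :=
  fun u v w =>
    ρ (T u) (T v) w + ρ (T v) (T w) u + ρ (T w) (T u) v + Θ (T u) (T v) (T w)

/-- Chevalley-Eilenberg coboundary of a 1-cochain θ : g → V. -/
def cobound {K : Type*} [Field K] {A M : Type*} [AddCommGroup A] [Module K A]
    [AddCommGroup M] [Module K M] (b : A → A → A → A) (ρ : A → A → M → M)
    (θ : A →ₗ[K] M) : A → A → A → M :=
  fun x y z => ρ x y (θ z) + ρ y z (θ x) + ρ z x (θ y) - θ (b x y z)

/-- Cyclic sum {x,y,z}^C = {x,y,z} + {y,z,x} + {z,x,y}. -/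
def cycSum {A : Type*} [AddCommGroup A] (m : A → A → A → A) : A → A → A → A :=
  fun x y z => m x y z + m y z x + m z x y

/-- Subadjacent bracket [x,y,z]_* = {x,y,z}^C + [[x,y,z]] of a 3-NS-Lie algebra. -/
def nsStar {A : Type*} [AddCommGroup A] (m n : A → A → A → A) : A → A → A → A :=
  fun x y z => cycSum m x y z + n x y z

/-- A 3-NS-Lie algebra structure on A given by operations m = {·,·,·} and n = [[·,·,·]]. -/
def IsThreeNS (K : Type*) [Field K] {A : Type*} [AddCommGroup A] [Module K A]
    (m n : A → A → A → A) : Prop :=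
  LinFst K m ∧ LinThd K m ∧ Skew12 m ∧ LinFst K n ∧ Skew12 n ∧ Skew23 n ∧
  (∀ x1 x2 x3 x4 x5 : A,
      m x1 x2 (m x3 x4 x5) =
        m (cycSum m x1 x2 x3) x4 x5 + m (n x1 x2 x3) x4 x5
          + m x3 (cycSum m x1 x2 x4) x5 + m x3 (n x1 x2 x4) x5
          + m x3 x4 (m x1 x2 x5)) ∧
  (∀ x1 x2 x3 x4 x5 : A,
      m (cycSum m x1 x2 x3) x4 x5 + m (n x1 x2 x3) x4 x5 =
        m x1 x2 (m x3 x4 x5) + m x2 x3 (m x1 x4 x5) + m x3 x1 (m x2 x4 x5)) ∧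
  (∀ x1 x2 x3 x4 x5 : A,
      n x1 x2 (nsStar m n x3 x4 x5) + m x1 x2 (n x3 x4 x5) =
        n (nsStar m n x1 x2 x3) x4 x5 + n x3 (nsStar m n x1 x2 x4) x5
          + n x3 x4 (nsStar m n x1 x2 x5)
          + m x4 x5 (n x1 x2 x3) + m x5 x3 (n x1 x2 x4) + m x3 x4 (n x1 x2 x5))

/-- Nijenhuis operator on a 3-Lie algebra. -/
def IsNijenhuis {K : Type*} [Field K] {A : Type*} [AddCommGroup A] [Module K A]
    (b : A → A → A → A) (N : A →ₗ[K] A) : Prop :=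
  ∀ x y z : A,
    b (N x) (N y) (N z) =
      N (b (N x) (N y) z + b (N x) y (N z) + b x (N y) (N z)
        - N (b (N x) y z + b x (N y) z + b x y (N z)) + N (N (b x y z)))

/-- A Lie algebra structure (bilinear skew bracket with Jacobi identity). -/
def IsLie (K : Type*) [Field K] {A : Type*} [AddCommGroup A] [Module K A]
    (br : A → A → A) : Prop :=
  (∀ (a : K) (x x' y : A), br (a • x + x') y = a • br x y + br x' y) ∧
  (∀ x y : A, br x y = - br y x) ∧
  (∀ x y z : A, br x (br y z) = br (br x y) z + br y (br x z))

/-- A representation of a Lie algebra. -/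
def IsLieRep (K : Type*) [Field K] {A M : Type*} [AddCommGroup A] [Module K A]
    [AddCommGroup M] [Module K M] (br : A → A → A) (ρ : A → M → M) : Prop :=
  (∀ (a : K) (x x' : A) (v : M), ρ (a • x + x') v = a • ρ x v + ρ x' v) ∧
  (∀ (x : A) (a : K) (v v' : M), ρ x (a • v + v') = a • ρ x v + ρ x v') ∧
  (∀ (x y : A) (v : M), ρ (br x y) v = ρ x (ρ y v) - ρ y (ρ x v))

/-- A Chevalley-Eilenberg 2-cocycle of a Lie algebra. -/
def IsLieCocycle (K : Type*) [Field K] {A M : Type*} [AddCommGroup A] [Module K A]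
    [AddCommGroup M] [Module K M] (br : A → A → A) (ρ : A → M → M)
    (Θ : A → A → M) : Prop :=
  (∀ (a : K) (x x' y : A), Θ (a • x + x') y = a • Θ x y + Θ x' y) ∧
  (∀ x y : A, Θ x y = - Θ y x) ∧
  (∀ x y z : A,
      ρ x (Θ y z) + ρ y (Θ z x) + ρ z (Θ x y)
        + Θ x (br y z) + Θ y (br z x) + Θ z (br x y) = 0)

/-- A Θ-twisted O-operator on a Lie algebra. -/
def IsLieTwistedO {K : Type*} [Field K] {A M : Type*} [AddCommGroup A] [Module K A]
    [AddCommGroup M] [Module K M] (br : A → A → A) (ρ : A → M → M)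
    (Θ : A → A → M) (T : M →ₗ[K] A) : Prop :=
  ∀ u v : M, br (T u) (T v) = T (ρ (T u) v - ρ (T v) u + Θ (T u) (T v))

/-- The 3-Lie bracket induced by a Lie bracket and a trace map τ. -/
def inducedTri {K : Type*} [Field K] {A : Type*} [AddCommGroup A] [Module K A]
    (br : A → A → A) (τ : A →ₗ[K] K) : A → A → A → A :=
  fun x y z => τ x • br y z + τ y • br z x + τ z • br x y

/-- The induced representation ρ_τ of the induced 3-Lie algebra. -/
def rhoTau {K : Type*} [Field K] {A M : Type*} [AddCommGroup A] [Module K A]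
    [AddCommGroup M] [Module K M] (ρ : A → M → M) (τ : A →ₗ[K] K) :
    A → A → M → M :=
  fun x y v => τ x • ρ y v - τ y • ρ x v

/-- The induced 2-cocycle Θ_τ on the induced 3-Lie algebra. -/
def thetaTau {K : Type*} [Field K] {A M : Type*} [AddCommGroup A] [Module K A]
    [AddCommGroup M] [Module K M] (Θ : A → A → M) (τ : A →ₗ[K] K) :
    A → A → A → M :=
  fun x y z => τ x • Θ y z + τ y • Θ z x + τ z • Θ x y

/-- An NS-Lie algebra structure on A. -/
def IsNSLie (K : Type*) [Field K] {A : Type*} [AddCommGroup A] [Module K A]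
    (m n : A → A → A) : Prop :=
  (∀ (a : K) (x x' y : A), m (a • x + x') y = a • m x y + m x' y) ∧
  (∀ (x : A) (a : K) (y y' : A), m x (a • y + y') = a • m x y + m x y') ∧
  (∀ (a : K) (x x' y : A), n (a • x + x') y = a • n x y + n x' y) ∧
  (∀ x y : A, n x y = - n y x) ∧
  (∀ x y z : A,
      m (m x y) z - m x (m y z) - m (m y x) z + m y (m x z) + m (n x y) z = 0) ∧
  (∀ x y z : A,
      n x (m y z - m z y + n y z) + n y (m z x - m x z + n z x)
        + n z (m x y - m y x + n x y)
        + m x (n y z) + m y (n z x) + m z (n x y) = 0)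

/-- a Θ-twisted O-operator induces a 3-NS-Lie algebra on V whose
subadjacent 3-Lie algebra is (V,[·,·,·]_T). -/
theorem stmt13 {K : Type*} [Field K] {A M : Type*} [AddCommGroup A] [Module K A]
    [AddCommGroup M] [Module K M]
    (b : A → A → A → A) (ρ : A → A → M → M) (Θ : A → A → A → M) (T : M →ₗ[K] A)
    (hb : IsThreeLie K b) (hρ : IsRep K b ρ) (hΘ : IsCocycle K b ρ Θ)
    (hT : IsTwistedO b ρ Θ T) :
    IsThreeNS K (fun u v w => ρ (T u) (T v) w)
        (fun u v w => Θ (T u) (T v) (T w)) ∧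
      ∀ u v w : M,
        nsStar (fun u v w => ρ (T u) (T v) w) (fun u v w => Θ (T u) (T v) (T w))
            u v w = indBracket ρ Θ T u v w := by
  obtain ⟨hρ1, hρ2, hρ3, hρ4, hρ5⟩ := hρ
  obtain ⟨hΘ1, hΘ2, hΘ3, hΘ4⟩ := hΘ
  set m : M → M → M → M := fun u v w => ρ (T u) (T v) w with hm
  set n : M → M → M → M := fun u v w => Θ (T u) (T v) (T w) with hn
  have hadd1 : ∀ (x x' y : A) (v : M), ρ (x + x') y v = ρ x y v + ρ x' y v := by
    intro x x' y v
    have := hρ1 (1 : K) x x' y v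
    simpa using this
  have hadd2 : ∀ (x y y' : A) (v : M), ρ x (y + y') v = ρ x y v + ρ x y' v := by
    intro x y y' v
    rw [hρ2 x (y + y') v, hadd1, hρ2 y x v, hρ2 y' x v]
    abel
  have hTstar : ∀ u v w : M, T (nsStar m n u v w) = b (T u) (T v) (T w) :=
    fun u v w => (hT u v w).symm
  have hnsT : ∀ u v w : M,
      T (cycSum m u v w) + T (n u v w) = b (T u) (T v) (T w) := by
    intro u v w
    rw [← map_add]
    exact hTstar u v w
  have h1 : ∀ u v w x4 : M, ∀ x5 : M,
      ρ (T (cycSum m u v w)) (T x4) x5 + ρ (T (n u v w)) (T x4) x5 =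
        ρ (b (T u) (T v) (T w)) (T x4) x5 := by
    intro u v w x4 x5
    rw [← hadd1, hnsT]
  have h2 : ∀ x3 u v w : M, ∀ x5 : M,
      ρ (T x3) (T (cycSum m u v w)) x5 + ρ (T x3) (T (n u v w)) x5 =
        ρ (T x3) (b (T u) (T v) (T w)) x5 := by
    intro x3 u v w x5
    rw [← hadd2, hnsT]
  refine ⟨⟨?_, ?_, ?_, ?_, ?_, ?_, ?_, ?_, ?_⟩, fun u v w => rfl⟩
  · intro a x x' y z
    show ρ (T (a • x + x')) (T y) z = a • ρ (T x) (T y) z + ρ (T x') (T y) z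
    rw [map_add, map_smul]
    exact hρ1 a (T x) (T x') (T y) z
  · intro a x y z z'
    exact hρ3 (T x) (T y) a z z'
  · intro x y z
    exact hρ2 (T x) (T y) z
  · intro a x x' y z
    show Θ (T (a • x + x')) (T y) (T z) = a • Θ (T x) (T y) (T z) + Θ (T x') (T y) (T z)
    rw [map_add, map_smul]
    exact hΘ1 a (T x) (T x') (T y) (T z)
  · intro x y z
    exact hΘ2 (T x) (T y) (T z)
  · intro x y z
    exact hΘ3 (T x) (T y) (T z)
  · intro x1 x2 x3 x4 x5
    show ρ (T x1) (T x2) (ρ (T x3) (T x4) x5) =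
        ρ (T (cycSum m x1 x2 x3)) (T x4) x5 + ρ (T (n x1 x2 x3)) (T x4) x5
          + ρ (T x3) (T (cycSum m x1 x2 x4)) x5 + ρ (T x3) (T (n x1 x2 x4)) x5
          + ρ (T x3) (T x4) (ρ (T x1) (T x2) x5)
    have key := hρ4 (T x1) (T x2) (T x3) (T x4) x5
    rw [key, ← h1, ← h2]
    abel
  · intro x1 x2 x3 x4 x5
    show ρ (T (cycSum m x1 x2 x3)) (T x4) x5 + ρ (T (n x1 x2 x3)) (T x4) x5 =
        ρ (T x1) (T x2) (ρ (T x3) (T x4) x5) + ρ (T x2) (T x3) (ρ (T x1) (T x4) x5)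
          + ρ (T x3) (T x1) (ρ (T x2) (T x4) x5)
    rw [h1]
    exact hρ5 (T x1) (T x2) (T x3) (T x4) x5
  · intro x1 x2 x3 x4 x5
    show Θ (T x1) (T x2) (T (nsStar m n x3 x4 x5))
          + ρ (T x1) (T x2) (Θ (T x3) (T x4) (T x5)) =
        Θ (T (nsStar m n x1 x2 x3)) (T x4) (T x5)
          + Θ (T x3) (T (nsStar m n x1 x2 x4)) (T x5)
          + Θ (T x3) (T x4) (T (nsStar m n x1 x2 x5))
          + ρ (T x4) (T x5) (Θ (T x1) (T x2) (T x3))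
          + ρ (T x5) (T x3) (Θ (T x1) (T x2) (T x4))
          + ρ (T x3) (T x4) (Θ (T x1) (T x2) (T x5))
    rw [hTstar, hTstar, hTstar, hTstar]
    exact hΘ4 (T x1) (T x2) (T x3) (T x4) (T x5)
end

section
/- Let (A, {·,·,·}, [[·,·,·]]) be a 3-NS-Lie algebra. Define L: Λ²A → gl(A) by L(x,y)z = {x,y,z} and Θ(x,y,z) = [[x,y,z]]. Then (A, L) is a representation of the subadjacent 3-Lie algebra (A, [·,·,·]_*), Θ is a 2-cocycle for this representation, and the identity map Id: A → A is a Θ-twisted O-operator. -/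
universe u

/-- for a 3-NS-Lie algebra, L = {·,·,·} is a representation of the
subadjacent 3-Lie algebra, [[·,·,·]] is a 2-cocycle, and Id is a twisted O-operator. -/
theorem stmt14 {K : Type*} [Field K] {A : Type*} [AddCommGroup A] [Module K A]
    (m n : A → A → A → A) (h : IsThreeNS K m n) :
    IsRep K (nsStar m n) m ∧ IsCocycle K (nsStar m n) m n ∧
      IsTwistedO (nsStar m n) m n (LinearMap.id : A →ₗ[K] A) := by
  obtain ⟨hm1, hm3, hms, hn1, hns12, hns23, h7, h8, h9⟩ := h
  have addFst : ∀ x x' y z : A, m (x + x') y z = m x y z + m x' y z := by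
    intro x x' y z
    have := hm1 1 x x' y z
    simpa using this
  have addSnd : ∀ x y y' z : A, m x (y + y') z = m x y z + m x y' z := by
    intro x y y' z
    rw [hms, addFst, neg_add, ← hms, ← hms]
  refine ⟨⟨hm1, hms, fun x y a v v' => hm3 a x y v v',
      fun x1 x2 x3 x4 v => ?_, fun x1 x2 x3 x4 v => ?_⟩,
    ⟨hn1, hns12, hns23, h9⟩, fun u v w => ?_⟩
  · simp only [nsStar]
    rw [addFst, addSnd, h7]
    abel
  · simp only [nsStar]
    rw [addFst, h8]
  · simp [nsStar, cycSum]
end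

section
/- A 3-Lie algebra (g, [·,·,·]_g) admits a compatible 3-NS-Lie algebra structure if and only if there exists an invertible Θ-twisted O-operator T: V → g with respect to some representation (V,ρ) and 2-cocycle Θ; in that case the structure is {x,y,z} = T(ρ(x,y)T⁻¹z) and [[x,y,z]] = T(Θ(x,y,z)). -/
universe u

/-- Bundled data of a representation, 2-cocycle and invertible twisted O-operator. -/
structure TwistedSetup (K : Type u) [Field K] (A : Type u) [AddCommGroup A]
    [Module K A] (b : A → A → A → A) : Type (u + 1) where
  V : Type u
  [ag : AddCommGroup V]
  [mo : Module K V]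
  ρ : A → A → V → V
  Θ : A → A → A → V
  T : V ≃ₗ[K] A
  rep : IsRep K b ρ
  coc : IsCocycle K b ρ Θ
  two : IsTwistedO b ρ Θ T.toLinearMap

attribute [instance] TwistedSetup.ag TwistedSetup.mo

/-- Auxiliary: a twisted O-operator given by a linear equivalence induces a compatible
3-NS-Lie structure. -/
theorem induced_ns {K : Type u} [Field K] {A : Type u} [AddCommGroup A] [Module K A]
    {V : Type u} [AddCommGroup V] [Module K V]
    (b : A → A → A → A) (ρ : A → A → V → V) (Θ : A → A → A → V) (T : V ≃ₗ[K] A)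
    (rep : IsRep K b ρ) (coc : IsCocycle K b ρ Θ)
    (two : IsTwistedO b ρ Θ T.toLinearMap) :
    IsThreeNS K (fun x y z => T (ρ x y (T.symm z))) (fun x y z => T (Θ x y z)) ∧
      ∀ x y z : A,
        b x y z =
          T (ρ x y (T.symm z)) + T (ρ y z (T.symm x))
            + T (ρ z x (T.symm y)) + T (Θ x y z) := by
  obtain ⟨r1, r2, r3, r4, r5⟩ := rep
  obtain ⟨c1, c2, c3, c4⟩ := coc
  have ρadd1 : ∀ (p q y : A) (v : V), ρ (p + q) y v = ρ p y v + ρ q y v := by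
    intro p q y v
    simpa using r1 1 p q y v
  have ρadd2 : ∀ (x p q : A) (v : V), ρ x (p + q) v = ρ x p v + ρ x q v := by
    intro x p q v
    rw [r2 x (p + q) v, ρadd1, r2 p x v, r2 q x v]
    abel
  have comp : ∀ x y z : A,
      b x y z =
        T (ρ x y (T.symm z)) + T (ρ y z (T.symm x))
          + T (ρ z x (T.symm y)) + T (Θ x y z) := by
    intro x y z
    have h := two (T.symm x) (T.symm y) (T.symm z)
    simp only [LinearEquiv.coe_coe, LinearEquiv.apply_symm_apply, map_add] at h
    exact h
  refine ⟨⟨?_, ?_, ?_, ?_, ?_, ?_, ?_, ?_, ?_⟩, comp⟩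
  · -- LinFst m
    intro a x x' y z
    simp only [r1, map_add, map_smul]
  · -- LinThd m
    intro a x y z z'
    simp only [map_add, map_smul, r3]
  · -- Skew12 m
    intro x y z
    simp only [r2 x y, map_neg]
  · -- LinFst n
    intro a x x' y z
    simp only [c1 a x x' y z, map_add, map_smul]
  · -- Skew12 n
    intro x y z
    simp only [c2 x y, map_neg]
  · -- Skew23 n
    intro x y z
    simp only [c3 x y, map_neg]
  · -- axiom 7
    intro x1 x2 x3 x4 x5
    have key := congrArg T (r4 x1 x2 x3 x4 (T.symm x5))
    rw [comp x1 x2 x3, comp x1 x2 x4] at key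
    simp only [ρadd1, ρadd2, map_add] at key
    simp only [cycSum, ρadd1, ρadd2, map_add, LinearEquiv.symm_apply_apply]
    rw [key]
    abel
  · -- axiom 8
    intro x1 x2 x3 x4 x5
    have key0 := r5 x1 x2 x3 x4 (T.symm x5)
    rw [comp x1 x2 x3] at key0
    have key := congrArg T key0
    simp only [ρadd1, map_add] at key
    simp only [cycSum, ρadd1, map_add, LinearEquiv.symm_apply_apply]
    rw [key]
  · -- axiom 9
    intro x1 x2 x3 x4 x5
    have hstar : ∀ x y z : A,
        nsStar (fun x y z => T (ρ x y (T.symm z))) (fun x y z => T (Θ x y z)) x y z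
          = b x y z := fun x y z => (comp x y z).symm
    have key := c4 x1 x2 x3 x4 x5
    simp only [hstar, LinearEquiv.symm_apply_apply, ← map_add]
    exact congrArg T key

/-- Auxiliary: a compatible 3-NS-Lie structure gives the trivial (identity) twisted
O-operator data. -/
theorem trivial_setup {K : Type u} [Field K] {A : Type u} [AddCommGroup A] [Module K A]
    (b : A → A → A → A) (m n : A → A → A → A) (hns : IsThreeNS K m n)
    (hcomp : ∀ x y z : A, b x y z = m x y z + m y z x + m z x y + n x y z) :
    IsRep K b m ∧ IsCocycle K b m n ∧
      IsTwistedO b m n (LinearEquiv.refl K A).toLinearMap := by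
  obtain ⟨hmf, hmt, hms, hnf, hn12, hn23, ax7, ax8, ax9⟩ := hns
  have madd1 : ∀ p q y z : A, m (p + q) y z = m p y z + m q y z := by
    intro p q y z
    simpa using hmf 1 p q y z
  have madd2 : ∀ x p q z : A, m x (p + q) z = m x p z + m x q z := by
    intro x p q z
    rw [hms x (p + q) z, madd1, hms p x z, hms q x z]
    abel
  refine ⟨⟨hmf, hms, fun x y a v v' => hmt a x y v v', ?_, ?_⟩,
    ⟨hnf, hn12, hn23, ?_⟩, ?_⟩
  · -- rep axiom 4
    intro x1 x2 x3 x4 v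
    have h7 := ax7 x1 x2 x3 x4 v
    simp only [cycSum, madd1, madd2] at h7
    rw [hcomp x1 x2 x3, hcomp x1 x2 x4]
    simp only [madd1, madd2]
    rw [h7]
    abel
  · -- rep axiom 5
    intro x1 x2 x3 x4 v
    have h8 := ax8 x1 x2 x3 x4 v
    simp only [cycSum, madd1] at h8
    rw [hcomp x1 x2 x3]
    simp only [madd1]
    rw [← h8]
  · -- cocycle identity
    intro x1 x2 y1 y2 y3
    have h9 := ax9 x1 x2 y1 y2 y3
    have hstar : ∀ x y z : A, nsStar m n x y z = b x y z :=
      fun x y z => (hcomp x y z).symm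
    simp only [hstar] at h9
    exact h9
  · -- twisted O-operator
    intro u v w
    simpa using hcomp u v w

/-- a 3-Lie algebra admits a compatible 3-NS-Lie structure iff it admits
an invertible twisted O-operator; in that case the structure is
{x,y,z} = T(ρ(x,y)T⁻¹z), [[x,y,z]] = T(Θ(x,y,z)). -/
theorem stmt15 {K : Type u} [Field K] {A : Type u} [AddCommGroup A] [Module K A]
    (b : A → A → A → A) (hb : IsThreeLie K b) :
    ((∃ m n : A → A → A → A, IsThreeNS K m n ∧
        ∀ x y z : A, b x y z = m x y z + m y z x + m z x y + n x y z) ↔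
      Nonempty (TwistedSetup K A b)) ∧
    ∀ S : TwistedSetup K A b,
      IsThreeNS K (fun x y z => S.T (S.ρ x y (S.T.symm z)))
          (fun x y z => S.T (S.Θ x y z)) ∧
        ∀ x y z : A,
          b x y z =
            S.T (S.ρ x y (S.T.symm z)) + S.T (S.ρ y z (S.T.symm x))
              + S.T (S.ρ z x (S.T.symm y)) + S.T (S.Θ x y z) := by
  have part2 : ∀ S : TwistedSetup K A b,
      IsThreeNS K (fun x y z => S.T (S.ρ x y (S.T.symm z)))
          (fun x y z => S.T (S.Θ x y z)) ∧
        ∀ x y z : A,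
          b x y z =
            S.T (S.ρ x y (S.T.symm z)) + S.T (S.ρ y z (S.T.symm x))
              + S.T (S.ρ z x (S.T.symm y)) + S.T (S.Θ x y z) :=
    fun S => induced_ns b S.ρ S.Θ S.T S.rep S.coc S.two
  refine ⟨⟨?_, ?_⟩, part2⟩
  · rintro ⟨m, n, hns, hcomp⟩
    obtain ⟨hrep, hcoc, htwo⟩ := trivial_setup b m n hns hcomp
    exact ⟨⟨A, m, n, LinearEquiv.refl K A, hrep, hcoc, htwo⟩⟩
  · rintro ⟨S⟩
    exact ⟨_, _, (part2 S).1, (part2 S).2⟩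
end

section
/- Let (g,[·,·]) be a Lie algebra with representation (V,ρ) and τ: g → K a trace map (τ([x,y]) = 0). If Θ: Λ²g → V is a Chevalley-Eilenberg 2-cocycle of the Lie algebra, then Θ_τ(x,y,z) := τ(x)Θ(y,z) + τ(y)Θ(z,x) + τ(z)Θ(x,y) is a 2-cocycle of the induced 3-Lie algebra (g, [·,·,·]_τ) with coefficients in the representation ρ_τ(x,y) = τ(x)ρ(y) - τ(y)ρ(x). -/
universe u

/-- Θ_τ is a 2-cocycle of the induced 3-Lie algebra with coefficients
in ρ_τ. -/
theorem stmt16 {K : Type*} [Field K] {A M : Type*} [AddCommGroup A] [Module K A]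
    [AddCommGroup M] [Module K M]
    (br : A → A → A) (ρ : A → M → M) (Θ : A → A → M) (τ : A →ₗ[K] K)
    (hbr : IsLie K br) (hρ : IsLieRep K br ρ)
    (htr : ∀ x y : A, τ (br x y) = 0)
    (hΘ : IsLieCocycle K br ρ Θ) :
    IsCocycle K (inducedTri br τ) (rhoTau ρ τ) (thetaTau Θ τ) := by
  obtain ⟨Θl, Θsk, Θcoc⟩ := hΘ
  obtain ⟨ρlA, ρlM, ρrep⟩ := hρ
  obtain ⟨brl, brsk, brjac⟩ := hbr
  have Θzero : ∀ y, Θ 0 y = 0 := by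
    intro y
    have h := Θl 1 0 0 y
    simp only [one_smul, add_zero, zero_add] at h
    exact (left_eq_add.mp h)
  have Θsmul1 : ∀ (a : K) x y, Θ (a • x) y = a • Θ x y := by
    intro a x y
    have h := Θl a x 0 y
    simpa [Θzero] using h
  have Θadd1 : ∀ x x' y, Θ (x + x') y = Θ x y + Θ x' y := by
    intro x x' y
    have h := Θl 1 x x' y
    simpa using h
  have Θneg1 : ∀ x y, Θ (-x) y = - Θ x y := by
    intro x y
    rw [← neg_one_smul K x, Θsmul1, neg_one_smul]
  have Θsmul2 : ∀ (a : K) x y, Θ x (a • y) = a • Θ x y := by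
    intro a x y
    rw [Θsk x (a • y), Θsmul1, Θsk y x, smul_neg, neg_neg]
  have Θadd2 : ∀ x y y', Θ x (y + y') = Θ x y + Θ x y' := by
    intro x y y'
    rw [Θsk x (y + y'), Θadd1, Θsk y x, Θsk y' x, neg_add, neg_neg, neg_neg]
  have Θneg2 : ∀ x y, Θ x (-y) = - Θ x y := by
    intro x y
    rw [← neg_one_smul K y, Θsmul2, neg_one_smul]
  have ρzeroM : ∀ x, ρ x (0 : M) = 0 := by
    intro x
    have h := ρlM x 1 0 0
    simp only [one_smul, add_zero, zero_add] at h
    exact (left_eq_add.mp h)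
  have ρsmulM : ∀ x (a : K) v, ρ x (a • v) = a • ρ x v := by
    intro x a v
    have h := ρlM x a v 0
    simpa [ρzeroM] using h
  have ρaddM : ∀ x v v', ρ x (v + v') = ρ x v + ρ x v' := by
    intro x v v'
    have h := ρlM x 1 v v'
    simpa using h
  have ρnegM : ∀ x v, ρ x (-v) = - ρ x v := by
    intro x v
    rw [← neg_one_smul K v, ρsmulM, neg_one_smul]
  have Θbr : ∀ u v w, Θ (br u v) w = - Θ w (br u v) := fun u v w => Θsk _ _
  have Cn : ∀ a b c, ρ a (Θ b c) - ρ b (Θ a c) + ρ c (Θ a b)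
      + Θ a (br b c) - Θ b (br a c) + Θ c (br a b) = 0 := by
    intro a b c
    have h := Θcoc a b c
    rw [show Θ c a = - Θ a c from Θsk c a, ρnegM,
      show br c a = - br a c from brsk c a, Θneg2] at h
    linear_combination (norm := module) h
  refine ⟨?_, ?_, ?_, ?_⟩
  · intro a x x' y z
    simp only [thetaTau, map_add, map_smul, smul_eq_mul, Θadd1, Θsmul1, Θadd2, Θsmul2]
    module
  · intro x y z
    simp only [thetaTau]
    linear_combination (norm := module) τ x • Θsk y z + τ y • Θsk z x + τ z • Θsk x y
  · intro x y z
    simp only [thetaTau]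
    linear_combination (norm := module) τ x • Θsk y z + τ y • Θsk z x + τ z • Θsk x y
  · intro x1 x2 y1 y2 y3
    simp only [thetaTau, rhoTau, inducedTri, map_add, map_smul, map_neg, smul_eq_mul, htr,
      mul_zero, add_zero, zero_add, zero_smul, smul_zero, neg_zero, mul_neg, neg_neg,
      Θadd1, Θsmul1, Θadd2, Θsmul2, Θneg1, Θneg2, ρaddM, ρsmulM, ρnegM,
      Θbr, smul_neg, neg_neg,
      show br y3 y1 = - br y1 y3 from brsk y3 y1,
      show br y1 x1 = - br x1 y1 from brsk y1 x1,
      show br y2 x1 = - br x1 y2 from brsk y2 x1,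
      show br y3 x1 = - br x1 y3 from brsk y3 x1,
      show Θ y3 y1 = - Θ y1 y3 from Θsk y3 y1,
      show Θ y1 x1 = - Θ x1 y1 from Θsk y1 x1,
      show Θ y2 x1 = - Θ x1 y2 from Θsk y2 x1,
      show Θ y3 x1 = - Θ x1 y3 from Θsk y3 x1]
    linear_combination (norm := module)
      (τ x1 * τ y1) • Cn x2 y2 y3 - (τ x1 * τ y2) • Cn x2 y1 y3
      + (τ x1 * τ y3) • Cn x2 y1 y2 - (τ x2 * τ y1) • Cn x1 y2 y3
      + (τ x2 * τ y2) • Cn x1 y1 y3 - (τ x2 * τ y3) • Cn x1 y1 y2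
end

section
/- Let T: V → g be a Θ-twisted O-operator on a Lie algebra (g,[·,·]) (i.e. [Tu,Tv] = T(ρ(Tu)v - ρ(Tv)u + Θ(Tu,Tv))) and τ a trace map on g. Then T is a Θ_τ-twisted O-operator on the induced 3-Lie algebra (g,[·,·,·]_τ) with respect to (V, ρ_τ), where ρ_τ(x,y) = τ(x)ρ(y) - τ(y)ρ(x) and Θ_τ(x,y,z) = τ(x)Θ(y,z) + τ(y)Θ(z,x) + τ(z)Θ(x,y). -/
universe u

/-- a Θ-twisted O-operator on a Lie algebra is a Θ_τ-twisted O-operator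
on the induced 3-Lie algebra. -/
theorem stmt17 {K : Type*} [Field K] {A M : Type*} [AddCommGroup A] [Module K A]
    [AddCommGroup M] [Module K M]
    (br : A → A → A) (ρ : A → M → M) (Θ : A → A → M) (τ : A →ₗ[K] K)
    (T : M →ₗ[K] A)
    (hbr : IsLie K br) (hρ : IsLieRep K br ρ)
    (htr : ∀ x y : A, τ (br x y) = 0)
    (hΘ : IsLieCocycle K br ρ Θ)
    (hT : IsLieTwistedO br ρ Θ T) :
    IsTwistedO (inducedTri br τ) (rhoTau ρ τ) (thetaTau Θ τ) T := by
  intro u v w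
  simp only [IsTwistedO, inducedTri, rhoTau, thetaTau, hT u v, hT v w, hT w u,
    ← map_smul, ← map_add]
  congr 1
  module
end

section
/- Let (A, {·,·}, [[·,·]]) be an NS-Lie algebra and τ: A → K a linear form with τ([x,y]_*) = 0, where [x,y]_* = {x,y} - {y,x} + [[x,y]]. Then {x,y,z}_τ := τ(x){y,z} - τ(y){x,z} and [[x,y,z]]_τ := τ(x)[[y,z]] + τ(y)[[z,x]] + τ(z)[[x,y]] define a 3-NS-Lie algebra structure on A. -/
universe u

/-!
Write `[x,y]_* = {x,y} - {y,x} + [[x,y]]`. The two NS-Lie axioms say that `{·,·}` is a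
representation and `[[·,·]]` a 2-cocycle of the Lie bracket `[·,·]_*`; likewise the 3-NS-Lie axioms
say that `{·,·,·}` is a representation and `[[·,·,·]]` a 2-cocycle of the 3-Lie bracket
`{x,y,z}^C + [[x,y,z]]`, which for the operations induced by `τ` is the 3-Lie bracket induced by
`[·,·]_*` and `τ`. So it suffices that `ρ ↦ ρ_τ` and `Θ ↦ Θ_τ` carry Lie representations and
cocycles to 3-Lie ones. For the cocycle, fix `x, y` and put `w = τ(x) y - τ(y) x`: then
`ρ_τ(x,y) = ρ(w)`, `Θ_τ(x,y,z) = Θ(w,z) + τ(z) Θ(x,y)` and `[x,y,z]_τ = [w,z] + τ(z) [x,y]`, and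
the 3-Lie cocycle identity becomes a `τ`-weighted sum of the Lie cocycle identity at `w`.
-/

theorem exists_linearMap₂_eq {K : Type*} [Field K] {A B C : Type*} [AddCommGroup A] [Module K A]
    [AddCommGroup B] [Module K B] [AddCommGroup C] [Module K C] {f : A → B → C}
    (hl : ∀ (a : K) x x' y, f (a • x + x') y = a • f x y + f x' y)
    (hr : ∀ x (a : K) y y', f x (a • y + y') = a • f x y + f x y') :
    ∃ F : A →ₗ[K] B →ₗ[K] C, (F · ·) = f := by
  have h0l : ∀ y, f 0 y = 0 := fun y => by simpa using hl 1 0 0 y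
  have h0r : ∀ x, f x 0 = 0 := fun x => by simpa using hr x 1 0 0
  exact ⟨LinearMap.mk₂ K f (fun x x' y => by simpa using hl 1 x x' y)
    (fun a x y => by simpa [h0l] using hl a x 0 y) (fun x y y' => by simpa using hr x 1 y y')
    (fun a x y => by simpa [h0r] using hr x a y 0), rfl⟩

theorem IsNSLie.exists_linearMap₂_eq {K : Type*} [Field K] {A : Type*} [AddCommGroup A]
    [Module K A] {m n : A → A → A} (h : IsNSLie K m n) :
    ∃ m' n' : A →ₗ[K] A →ₗ[K] A, (m' · ·) = m ∧ (n' · ·) = n := by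
  obtain ⟨hml, hmr, hnl, hn, -⟩ := h
  obtain ⟨m', hm'⟩ := _root_.exists_linearMap₂_eq hml hmr
  obtain ⟨n', hn'⟩ := _root_.exists_linearMap₂_eq hnl fun x a y y' => by
    rw [hn, hnl, hn x y, hn x y', neg_add, smul_neg]
  exact ⟨m', n', hm', hn'⟩

theorem isThreeNS_of_isRep_of_isCocycle {K : Type*} [Field K] {A : Type*} [AddCommGroup A]
    [Module K A] {m n : A → A → A → A} (hρ : IsRep K (nsStar m n) m)
    (hΘ : IsCocycle K (nsStar m n) m n) : IsThreeNS K m n := by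
  obtain ⟨hlin, hskew, hlin₃, hrep, hrep'⟩ := hρ
  obtain ⟨hnlin, hnskew₁₂, hnskew₂₃, hcoc⟩ := hΘ
  have hadd₁ : ∀ x x' y z, m (x + x') y z = m x y z + m x' y z := fun x x' y z => by
    simpa using hlin 1 x x' y z
  have hadd₂ : ∀ x y y' z, m x (y + y') z = m x y z + m x y' z := fun x y y' z => by
    rw [hskew, hadd₁, neg_add, ← hskew, ← hskew]
  refine ⟨hlin, fun a x y z z' => hlin₃ x y a z z', hskew, hnlin, hnskew₁₂, hnskew₂₃,
    fun x1 x2 x3 x4 x5 => ?_, fun x1 x2 x3 x4 x5 => ?_, hcoc⟩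
  · rw [hrep, nsStar, nsStar, hadd₁, hadd₂]
    abel
  · rw [← hrep', nsStar, hadd₁]

theorem nsStar_rhoTau_thetaTau {K : Type*} [Field K] {A : Type*} [AddCommGroup A]
    [Module K A] (m n : A → A → A) (τ : A →ₗ[K] K) :
    nsStar (rhoTau m τ) (thetaTau n τ) = inducedTri (fun x y => m x y - m y x + n x y) τ := by
  ext x y z
  simp only [nsStar, cycSum, rhoTau, thetaTau, inducedTri]
  module

section InducedByTrace

variable {K : Type*} [Field K] {A M : Type*} [AddCommGroup A] [Module K A]
  [AddCommGroup M] [Module K M] (τ : A →ₗ[K] K)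

theorem map_inducedTri_eq_zero {br : A → A → A} (hτ : ∀ x y, τ (br x y) = 0) (x y z : A) :
    τ (inducedTri br τ x y z) = 0 := by
  simp [inducedTri, hτ]

theorem rhoTau_apply_eq (ρ : A →ₗ[K] M →ₗ[K] M) (x y : A) (v : M) :
    rhoTau (ρ · ·) τ x y v = ρ (τ x • y - τ y • x) v := by
  simp [rhoTau]

theorem thetaTau_eq {Θ : A →ₗ[K] A →ₗ[K] M} (hΘ : ∀ x y, Θ x y = -Θ y x) (x y z : A) :
    thetaTau (Θ · ·) τ x y z = Θ (τ x • y - τ y • x) z + τ z • Θ x y := by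
  simp only [thetaTau, map_sub, map_smul, LinearMap.sub_apply, LinearMap.smul_apply]
  linear_combination (norm := module) τ y • hΘ z x

theorem isRep_rhoTau {br : A → A → A} {ρ : A →ₗ[K] M →ₗ[K] M}
    (hρ : ∀ x y v, ρ (br x y) v = ρ x (ρ y v) - ρ y (ρ x v)) (hτ : ∀ x y, τ (br x y) = 0) :
    IsRep K (inducedTri br τ) (rhoTau (ρ · ·) τ) := by
  refine ⟨fun a x x' y v => ?_, fun x y v => ?_, fun x y a v v' => ?_,
    fun x1 x2 x3 x4 v => ?_, fun x1 x2 x3 x4 v => ?_⟩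
  · simp only [rhoTau, map_add, map_smul, LinearMap.add_apply, LinearMap.smul_apply, smul_eq_mul]
    module
  · simp only [rhoTau]
    abel
  · simp only [rhoTau, map_add, map_smul]
    module
  · simp only [rhoTau, map_inducedTri_eq_zero τ hτ, zero_smul, zero_sub]
    simp only [inducedTri, map_add, map_smul, map_sub, LinearMap.add_apply, LinearMap.smul_apply]
    linear_combination (norm := module)
      (τ x1 * τ x4) • hρ x2 x3 v - (τ x1 * τ x3) • hρ x2 x4 v
        + (τ x2 * τ x4) • hρ x3 x1 v - (τ x2 * τ x3) • hρ x4 x1 v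
  · simp only [rhoTau, map_inducedTri_eq_zero τ hτ, zero_smul, zero_sub]
    simp only [inducedTri, map_add, map_smul, map_sub, LinearMap.add_apply, LinearMap.smul_apply]
    linear_combination (norm := module)
      -(τ x1 * τ x4) • hρ x2 x3 v - (τ x2 * τ x4) • hρ x3 x1 v - (τ x3 * τ x4) • hρ x1 x2 v

variable {br : A →ₗ[K] A →ₗ[K] A} {ρ : A →ₗ[K] M →ₗ[K] M} {Θ : A →ₗ[K] A →ₗ[K] M}

theorem cocycle_derivation (hbr : ∀ x y, br x y = -br y x) (hΘ : ∀ x y, Θ x y = -Θ y x)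
    (hcoc : ∀ x y z, ρ x (Θ y z) + ρ y (Θ z x) + ρ z (Θ x y)
      + Θ x (br y z) + Θ y (br z x) + Θ z (br x y) = 0) (w a b : A) :
    Θ w (br a b) + ρ w (Θ a b) =
      Θ (br w a) b + Θ a (br w b) + ρ a (Θ w b) - ρ b (Θ w a) := by
  have h := hcoc w a b
  rw [hΘ b w, hbr b w, hΘ b (br w a)] at h
  simp only [map_neg] at h
  linear_combination (norm := module) h

theorem isCocycle_thetaTau (hbr : ∀ x y, br x y = -br y x) (hΘ : ∀ x y, Θ x y = -Θ y x)
    (hcoc : ∀ x y z, ρ x (Θ y z) + ρ y (Θ z x) + ρ z (Θ x y)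
      + Θ x (br y z) + Θ y (br z x) + Θ z (br x y) = 0)
    (hτ : ∀ x y, τ (br x y) = 0) :
    IsCocycle K (inducedTri (br · ·) τ) (rhoTau (ρ · ·) τ) (thetaTau (Θ · ·) τ) := by
  refine ⟨fun a x x' y z => ?_, fun x y z => ?_, fun x y z => ?_, fun x1 x2 y1 y2 y3 => ?_⟩
  · simp only [thetaTau, map_add, map_smul, LinearMap.add_apply, LinearMap.smul_apply, smul_eq_mul]
    module
  · simp only [thetaTau]
    linear_combination (norm := module) τ x • hΘ y z + τ y • hΘ z x + τ z • hΘ x y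
  · simp only [thetaTau]
    linear_combination (norm := module) τ x • hΘ y z + τ y • hΘ z x + τ z • hΘ x y
  · -- `inducedTri` is `thetaTau` with values in `A`
    have hS : ∀ z, inducedTri (br · ·) τ x1 x2 z = br (τ x1 • x2 - τ x2 • x1) z + τ z • br x1 x2 :=
      thetaTau_eq τ hbr x1 x2
    simp only [rhoTau_apply_eq τ ρ x1 x2, thetaTau_eq τ hΘ x1 x2, hS,
      map_inducedTri_eq_zero τ hτ, zero_smul, add_zero]
    generalize τ x1 • x2 - τ x2 • x1 = w
    have D := cocycle_derivation hbr hΘ hcoc w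
    simp only [thetaTau, inducedTri, rhoTau, map_add, map_smul, LinearMap.add_apply,
      LinearMap.smul_apply, hτ, smul_eq_mul, mul_zero, zero_add, add_zero, zero_smul]
    linear_combination (norm := module) τ y1 • D y2 y3 + τ y2 • D y3 y1 + τ y3 • D y1 y2
      - (τ y1 * τ y2) • hΘ y3 (br x1 x2) - (τ y2 * τ y3) • hΘ y1 (br x1 x2)
      - (τ y3 * τ y1) • hΘ y2 (br x1 x2)

theorem isThreeNS_rhoTau_thetaTau {m n s : A →ₗ[K] A →ₗ[K] A}
    (hs : ∀ x y, s x y = m x y - m y x + n x y) (hn : ∀ x y, n x y = -n y x)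
    (hρ : ∀ x y z, m (s x y) z = m x (m y z) - m y (m x z))
    (hcoc : ∀ x y z, m x (n y z) + m y (n z x) + m z (n x y)
      + n x (s y z) + n y (s z x) + n z (s x y) = 0)
    (hτ : ∀ x y, τ (s x y) = 0) :
    IsThreeNS K (rhoTau (m · ·) τ) (thetaTau (n · ·) τ) := by
  have hstar : nsStar (rhoTau (m · ·) τ) (thetaTau (n · ·) τ) = inducedTri (s · ·) τ := by
    rw [nsStar_rhoTau_thetaTau]
    simp only [hs]
  have hs_skew : ∀ x y, s x y = -s y x := fun x y => by
    rw [hs, hs, hn]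
    abel
  apply isThreeNS_of_isRep_of_isCocycle <;> rw [hstar]
  · exact isRep_rhoTau τ hρ hτ
  · exact isCocycle_thetaTau τ hs_skew hn hcoc hτ

end InducedByTrace

/-- an NS-Lie algebra and a trace map induce a 3-NS-Lie algebra. -/
theorem stmt18 {K : Type*} [Field K] {A : Type*} [AddCommGroup A] [Module K A]
    (m n : A → A → A) (τ : A →ₗ[K] K)
    (h : IsNSLie K m n)
    (htr : ∀ x y : A, τ (m x y - m y x + n x y) = 0) :
    IsThreeNS K (fun x y z => τ x • m y z - τ y • m x z)
      (fun x y z => τ x • n y z + τ y • n z x + τ z • n x y) := by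
  obtain ⟨m, n, rfl, rfl⟩ := h.exists_linearMap₂_eq
  obtain ⟨-, -, -, hn, hrep, hcoc⟩ := h
  beta_reduce at hn hrep hcoc htr
  obtain ⟨s, hs⟩ : ∃ s : A →ₗ[K] A →ₗ[K] A, ∀ x y, s x y = m x y - m y x + n x y :=
    ⟨m - m.flip + n, fun x y => by simp⟩
  refine isThreeNS_rhoTau_thetaTau τ hs hn (fun x y z => ?_) (fun x y z => ?_)
    fun x y => by rw [hs]; exact htr x y
  · simp only [hs, map_add, map_sub, LinearMap.add_apply, LinearMap.sub_apply]
    linear_combination (norm := module) hrep x y z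
  · simp only [hs]
    linear_combination (norm := module) hcoc x y z
end
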